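/- arXiv:2402.09384 — 4 statements merged into one kernel-verified Lean document; each statement's English description precedes it below -/
import Mathlib

section
/- Sufficiency of posterior separation for strict delegation value: let μ̄_P, μ̄_A ∈ (0,1) be the principal's and agent's cutoffs, and suppose the agent's final posteriors satisfy μ₀' < min{μ̄_P, μ̄_A} and μ₁' > max{μ̄_P, μ̄_A}, where μ₀', μ₁' are the posteriors from the agent's binary signal starting from interim belief μ ∈ (0,1), with w·μ₀' + (1-w)·μ₁' = μ for w ∈ (0,1) the probability of the low realization. Then the expected delegation payoff w·V_D(μ₀') + (1-w)·V_D(μ₁') strictly exceeds V_N(μ), where V_D(x) equals the principal's payoff of action 0 at belief x if x < μ̄_A and of action 1 if x ≥ μ̄_A, and V_N(x) is the maximum of the two action payoffs at x. -/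
/-- Sufficiency of posterior separation for strict delegation value. -/
theorem posterior_separation_strict_delegation
    (r00 r01 r10 r11 μP μA μ μ0 μ1 w : ℝ)
    (h0 : r00 > r01) (h1 : r11 > r10)
    (hμP : μP = (r00 - r01) / (r00 - r01 + r11 - r10))
    (hA : μA ∈ Set.Ioo (0:ℝ) 1) (hPA : μP ≠ μA)
    (hμ : μ ∈ Set.Ioo (0:ℝ) 1)
    (hw : w ∈ Set.Ioo (0:ℝ) 1)
    (hmean : w * μ0 + (1 - w) * μ1 = μ)
    (hlow : μ0 < min μP μA) (hhigh : μ1 > max μP μA) :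
    w * (if μ0 < μA then (1 - μ0) * r00 + μ0 * r10 else (1 - μ0) * r01 + μ0 * r11) +
      (1 - w) * (if μ1 < μA then (1 - μ1) * r00 + μ1 * r10 else (1 - μ1) * r01 + μ1 * r11) >
      max ((1 - μ) * r00 + μ * r10) ((1 - μ) * r01 + μ * r11) := by
  obtain ⟨hw0, hw1⟩ := hw
  have hl : μ0 < μA := lt_of_lt_of_le hlow (min_le_right _ _)
  have hh : ¬ μ1 < μA := not_lt.mpr (le_of_lt (lt_of_le_of_lt (le_max_right μP μA) hhigh))
  rw [if_pos hl, if_neg hh]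
  have hlP : μ0 < μP := lt_of_lt_of_le hlow (min_le_left _ _)
  have hhP : μ1 > μP := lt_of_le_of_lt (le_max_left μP μA) hhigh
  have hab : r00 - r01 + r11 - r10 > 0 := by linarith
  have h0' : μ0 * (r00 - r01 + r11 - r10) < r00 - r01 := by
    have h : μ0 < (r00 - r01) / (r00 - r01 + r11 - r10) := hμP ▸ hlP
    have := (lt_div_iff₀ hab).mp h
    linarith
  have h1' : μ1 * (r00 - r01 + r11 - r10) > r00 - r01 := by
    have h : (r00 - r01) / (r00 - r01 + r11 - r10) < μ1 := hμP ▸ hhP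
    have := (div_lt_iff₀ hab).mp h
    linarith
  -- U0(μ0) > U1(μ0), U1(μ1) > U0(μ1)
  have e0 : (1 - μ0) * r00 + μ0 * r10 > (1 - μ0) * r01 + μ0 * r11 := by nlinarith
  have e1 : (1 - μ1) * r01 + μ1 * r11 > (1 - μ1) * r00 + μ1 * r10 := by nlinarith
  subst hmean
  rw [gt_iff_lt, max_lt_iff]
  constructor
  · nlinarith [mul_pos (by linarith : (0:ℝ) < 1 - w) (by linarith : (0:ℝ) < ((1 - μ1) * r01 + μ1 * r11) - ((1 - μ1) * r00 + μ1 * r10))]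
  · nlinarith [mul_pos hw0 (by linarith : (0:ℝ) < ((1 - μ0) * r00 + μ0 * r10) - ((1 - μ0) * r01 + μ0 * r11))]
end

section
/- Necessary condition for strict delegation value: with notation as in the delegation model, if the expected delegation payoff w·V_D(μ₀') + (1-w)·V_D(μ₁') strictly exceeds V_N(μ) (where w·μ₀' + (1-w)·μ₁' = μ, w ∈ (0,1), μ₀' ≤ μ ≤ μ₁'), then μ₁' - μ₀' > |μ̄_P - μ̄_A|. -/
/-- Necessary condition for strict delegation value: the posterior spread must exceed
the length of the disagreement interval. -/
theorem strict_delegation_necessary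
    (r00 r01 r10 r11 μP μA μ μ0 μ1 w : ℝ)
    (h0 : r00 > r01) (h1 : r11 > r10)
    (hμP : μP = (r00 - r01) / (r00 - r01 + r11 - r10))
    (hA : μA ∈ Set.Ioo (0:ℝ) 1)
    (hw : w ∈ Set.Ioo (0:ℝ) 1)
    (hmean : w * μ0 + (1 - w) * μ1 = μ)
    (hord : μ0 ≤ μ ∧ μ ≤ μ1)
    (hstrict :
      w * (if μ0 < μA then (1 - μ0) * r00 + μ0 * r10 else (1 - μ0) * r01 + μ0 * r11) +
        (1 - w) * (if μ1 < μA then (1 - μ1) * r00 + μ1 * r10 else (1 - μ1) * r01 + μ1 * r11) >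
        max ((1 - μ) * r00 + μ * r10) ((1 - μ) * r01 + μ * r11)) :
    μ1 - μ0 > |μP - μA| := by
  obtain ⟨hA0, hA1⟩ := hA
  obtain ⟨hw0, hw1⟩ := hw
  obtain ⟨h01, h02⟩ := hord
  have hm0 := le_max_left ((1 - μ) * r00 + μ * r10) ((1 - μ) * r01 + μ * r11)
  have hm1 := le_max_right ((1 - μ) * r00 + μ * r10) ((1 - μ) * r01 + μ * r11)
  have heq0 : w * ((1 - μ0) * r00 + μ0 * r10) + (1 - w) * ((1 - μ1) * r00 + μ1 * r10)
      = (1 - μ) * r00 + μ * r10 := by linear_combination (r10 - r00) * hmean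
  have heq1 : w * ((1 - μ0) * r01 + μ0 * r11) + (1 - w) * ((1 - μ1) * r01 + μ1 * r11)
      = (1 - μ) * r01 + μ * r11 := by linear_combination (r11 - r01) * hmean
  have hsum : (0:ℝ) < r00 - r01 + r11 - r10 := by linarith
  by_cases c0 : μ0 < μA <;> by_cases c1 : μ1 < μA
  · rw [if_pos c0, if_pos c1] at hstrict
    linarith
  · rw [if_pos c0, if_neg c1] at hstrict
    -- deduce U1(μ1) > U0(μ1), hence μ1 > μP
    have hstep1 : (1 - w) * ((1 - μ1) * r00 + μ1 * r10)
        < (1 - w) * ((1 - μ1) * r01 + μ1 * r11) := by linarith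
    have hU1 := (mul_lt_mul_iff_right₀ (by linarith : (0:ℝ) < 1 - w)).mp hstep1
    -- deduce U0(μ0) > U1(μ0), hence μ0 < μP
    have hstep0 : w * ((1 - μ0) * r01 + μ0 * r11)
        < w * ((1 - μ0) * r00 + μ0 * r10) := by linarith
    have hU0 := (mul_lt_mul_iff_right₀ hw0).mp hstep0
    have hP1 : μP < μ1 := by
      rw [hμP, div_lt_iff₀ hsum]; nlinarith
    have hP0 : μ0 < μP := by
      rw [hμP, lt_div_iff₀ hsum]; nlinarith
    push_neg at c1
    rw [gt_iff_lt, abs_lt]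
    constructor <;> linarith
  · exfalso; push_neg at c0; linarith
  · rw [if_neg c0, if_neg c1] at hstrict
    linarith
end

section
/- A more misaligned agent weakly decreases the delegation payoff: let μ̄_A, μ̄_A' be two agent cutoffs with the disagreement interval of μ̄_A' containing that of μ̄_A (i.e., if μ̄_P < μ̄_A then μ̄_P < μ̄_A ≤ μ̄_A'; if μ̄_A < μ̄_P then μ̄_A' ≤ μ̄_A < μ̄_P). Let V_D and V_D' be the corresponding delegation envelopes. Then for all x ∈ [0,1], V_D'(x) ≤ V_D(x), and consequently for any posteriors μ₀', μ₁' and weight w ∈ [0,1], w·V_D'(μ₀') + (1-w)·V_D'(μ₁') ≤ w·V_D(μ₀') + (1-w)·V_D(μ₁'). -/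
/-- A more misaligned agent weakly decreases the delegation envelope pointwise, and hence
the expected delegation payoff. -/
theorem more_misaligned_weakly_worse
    (r00 r01 r10 r11 μP μA μA' : ℝ)
    (h0 : r00 > r01) (h1 : r11 > r10)
    (hμP : μP = (r00 - r01) / (r00 - r01 + r11 - r10))
    (hcontain : (μP < μA ∧ μA ≤ μA') ∨ (μA' ≤ μA ∧ μA < μP))
    (VD VD' : ℝ → ℝ)
    (hVD : ∀ x, VD x =
      if x < μA then (1 - x) * r00 + x * r10 else (1 - x) * r01 + x * r11)
    (hVD' : ∀ x, VD' x =
      if x < μA' then (1 - x) * r00 + x * r10 else (1 - x) * r01 + x * r11) :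
    (∀ x ∈ Set.Icc (0:ℝ) 1, VD' x ≤ VD x) ∧
      ∀ μ0 ∈ Set.Icc (0:ℝ) 1, ∀ μ1 ∈ Set.Icc (0:ℝ) 1, ∀ w ∈ Set.Icc (0:ℝ) 1,
        w * VD' μ0 + (1 - w) * VD' μ1 ≤ w * VD μ0 + (1 - w) * VD μ1 := by
  have hAB : r00 - r01 + r11 - r10 > 0 := by linarith
  have hμPe : μP * (r00 - r01 + r11 - r10) = r00 - r01 := by
    rw [hμP]; field_simp
  have key : ∀ x, VD' x ≤ VD x := by
    intro x
    rw [hVD, hVD']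
    rcases hcontain with ⟨hA, hB⟩ | ⟨hA, hB⟩
    · by_cases hx : x < μA
      · have hx' : x < μA' := lt_of_lt_of_le hx hB
        simp [hx, hx']
      · by_cases hx' : x < μA'
        · simp [hx, hx']
          have hxge : μA ≤ x := le_of_not_gt hx
          have : μP ≤ x := le_trans (le_of_lt hA) hxge
          nlinarith
        · simp [hx, hx']
    · by_cases hx' : x < μA'
      · have hx : x < μA := lt_of_lt_of_le hx' hA
        simp [hx, hx']
      · by_cases hx : x < μA
        · simp [hx, hx']
          have : x ≤ μP := le_of_lt (lt_trans hx hB)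
          nlinarith
        · simp [hx, hx']
  refine ⟨fun x _ => key x, ?_⟩
  intro μ0 _ μ1 _ w hw
  obtain ⟨hw0, hw1⟩ := hw
  have h1w : (0:ℝ) ≤ 1 - w := by linarith
  exact add_le_add (mul_le_mul_of_nonneg_left (key μ0) hw0)
    (mul_le_mul_of_nonneg_left (key μ1) h1w)
end

section
/- A more informative agent can strictly reduce the delegation payoff: there exist principal payoffs r with r₀₀ > r₀₁, r₁₁ > r₁₀, an agent cutoff μ̄_A ∈ (0,1) with μ̄_A > μ̄_P, a prior μ ∈ (0,1), and two signal accuracy pairs (q₀,q₁), (q₀',q₁') with q₀' ≥ q₀, q₁' ≥ q₁, q₀+q₁ > 1 (strict inequality in at least one coordinate), such that the expected delegation payoff under the more informative signal is strictly less than under the less informative signal: Pr'(S=0)·V_D(μ₀'') + Pr'(S=1)·V_D(μ₁'') < Pr(S=0)·V_D(μ₀') + Pr(S=1)·V_D(μ₁'), where posteriors and realization probabilities are computed from the prior μ by Bayes' rule under the respective signals. -/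
/-- A more informative agent's signal can strictly reduce the principal's delegation payoff. -/
theorem more_informative_can_hurt_delegation :
    ∃ r00 r01 r10 r11 μA μ q0 q1 q0' q1' : ℝ,
      r00 > r01 ∧ r11 > r10 ∧
      μA ∈ Set.Ioo (0:ℝ) 1 ∧
      μA > (r00 - r01) / (r00 - r01 + r11 - r10) ∧
      μ ∈ Set.Ioo (0:ℝ) 1 ∧
      q0 ∈ Set.Ioo (0:ℝ) 1 ∧ q1 ∈ Set.Ioo (0:ℝ) 1 ∧
      q0' ∈ Set.Ioo (0:ℝ) 1 ∧ q1' ∈ Set.Ioo (0:ℝ) 1 ∧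
      q0 + q1 > 1 ∧
      q0' ≥ q0 ∧ q1' ≥ q1 ∧ (q0' > q0 ∨ q1' > q1) ∧
      (let VD : ℝ → ℝ := fun x =>
        if x < μA then (1 - x) * r00 + x * r10 else (1 - x) * r01 + x * r11
      (q0' * (1 - μ) + (1 - q1') * μ) *
          VD ((1 - q1') * μ / (q0' * (1 - μ) + (1 - q1') * μ)) +
        ((1 - q0') * (1 - μ) + q1' * μ) *
          VD (q1' * μ / ((1 - q0') * (1 - μ) + q1' * μ)) <
      (q0 * (1 - μ) + (1 - q1) * μ) *
          VD ((1 - q1) * μ / (q0 * (1 - μ) + (1 - q1) * μ)) +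
        ((1 - q0) * (1 - μ) + q1 * μ) *
          VD (q1 * μ / ((1 - q0) * (1 - μ) + q1 * μ))) := by
  refine ⟨1, 0, 0, 1, 7/10, 3/4, 11/20, 11/20, 7/10, 11/20,
    by norm_num, by norm_num, by constructor <;> norm_num, by norm_num,
    by constructor <;> norm_num, by constructor <;> norm_num,
    by constructor <;> norm_num, by constructor <;> norm_num,
    by constructor <;> norm_num, by norm_num, by norm_num, le_refl _,
    Or.inl (by norm_num), ?_⟩
  norm_num
end
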